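/- Let λ1 ∈ Q_I^+, λ2 ∈ Q_I^{++}, and suppose μ1, μ2 ∈ V are subdominant to λ1 and λ2 respectively and ⟨μ1, μ2⟩ = ⟨λ1, λ2⟩. Then there exists w ∈ W with μ1 = wλ1 such that w sends α_i to a positive root for every i ∈ I (equivalently, w is the minimal length representative of its coset wW_I, i.e. w ∈ W^I). -/

import Mathlib

/-!
Combinatorial setup: a finite crystallographic root system `Φ` spanning a Euclidean
space `V`, with a chosen system of simple roots `α 1, …, α r`, simple coroots
`αᵛ i = (2/⟪α i, α i⟫) • α i`, Weyl group `W` (the subgroup of linear isometries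
generated by the reflections in the simple roots), dominant elements, and the notion
of `μ` being subdominant to a dominant `λ` (the dominant representative `μ⁺` of the
orbit `W μ` satisfies `λ - μ⁺ ∈ Σᵢ ℝ≥0 αᵛ i`).  `Q_I^+` is encoded via the pairings
with the simple coroots: `λ ∈ Q_I^+` iff `⟪λ, αᵛ j⟫ ∈ ℤ≥0` for all `j` and
`⟪λ, αᵛ j⟫ = 0` for `j ∈ I` (equivalently `λ = Σ_{i ∉ I} n_i ω_i`, `n_i ∈ ℤ≥0`,
where the `ω_i` are the fundamental weights, the dual basis to the simple coroots).
-/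

open scoped RealInnerProductSpace

/-- A finite crystallographic root system spanning `V`, together with a choice of
system of simple roots `α 1, …, α r`. -/
structure SimpleSystem (V : Type*) [NormedAddCommGroup V] [InnerProductSpace ℝ V]
    (r : ℕ) where
  /-- the (finite) set of roots -/
  Φ : Finset V
  /-- the simple roots -/
  α : Fin r → V
  α_mem : ∀ i, α i ∈ Φ
  ne_zero : ∀ β ∈ Φ, β ≠ 0
  span_eq_top : Submodule.span ℝ (Φ : Set V) = ⊤
  indep : LinearIndependent ℝ α
  /-- every root is a nonnegative or a nonpositive combination of the simple roots -/
  base : ∀ β ∈ Φ, (∃ c : Fin r → ℝ, (∀ i, 0 ≤ c i) ∧ β = ∑ i, c i • α i) ∨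
      (∃ c : Fin r → ℝ, (∀ i, 0 ≤ c i) ∧ β = - ∑ i, c i • α i)
  /-- the crystallographic condition -/
  crystallographic : ∀ β ∈ Φ, ∀ γ ∈ Φ, ∃ n : ℤ, 2 * ⟪β, γ⟫ / ⟪γ, γ⟫ = (n : ℝ)
  /-- `Φ` is stable under the reflections `s_β` -/
  reflect_mem : ∀ β ∈ Φ, ∀ γ ∈ Φ, γ - (2 * ⟪γ, β⟫ / ⟪β, β⟫) • β ∈ Φ

namespace SimpleSystem

variable {V : Type*} [NormedAddCommGroup V] [InnerProductSpace ℝ V]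
  [FiniteDimensional ℝ V] {r : ℕ}

/-- The simple coroot `αᵛ i = 2 α i / ⟪α i, α i⟫`. -/
noncomputable def coroot (S : SimpleSystem V r) (i : Fin r) : V :=
  (2 / ⟪S.α i, S.α i⟫) • S.α i

/-- The simple reflection `s_i`: the orthogonal reflection in the hyperplane
orthogonal to the simple root `α i`. -/
noncomputable def simpleReflection (S : SimpleSystem V r) (i : Fin r) : V ≃ₗᵢ[ℝ] V :=
  Submodule.reflection (ℝ ∙ S.α i)ᗮ

/-- The Weyl group `W`, as a group of linear isometries of `V`. -/
def weylGroup (S : SimpleSystem V r) : Subgroup (V ≃ₗᵢ[ℝ] V) :=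
  Subgroup.closure (Set.range S.simpleReflection)

/-- `ξ ∈ V` is dominant if `⟪ξ, αᵛ i⟫ ≥ 0` for all `i`. -/
def IsDominant (S : SimpleSystem V r) (ξ : V) : Prop :=
  ∀ i, 0 ≤ ⟪ξ, S.coroot i⟫

/-- `μ` is subdominant to (the dominant element) `lam` if the dominant element `μ⁺`
of the orbit `W μ` satisfies `lam - μ⁺ ∈ Σᵢ ℝ≥0 • (αᵛ i)`. -/
def IsSubdominant (S : SimpleSystem V r) (lam μ : V) : Prop :=
  ∃ w ∈ S.weylGroup, S.IsDominant (w μ) ∧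
    ∃ c : Fin r → ℝ, (∀ i, 0 ≤ c i) ∧ lam - w μ = ∑ i, c i • S.coroot i

/-- Membership in `Q_I^+ = {Σ_{i ∈ Iᶜ} n_i ω_i : n_i ∈ ℤ≥0}`, characterized by the
pairings with the simple coroots: all of them are nonnegative integers, and those
indexed by `I` vanish. -/
def MemQplus (S : SimpleSystem V r) (I : Finset (Fin r)) (lam : V) : Prop :=
  ∀ j, (∃ n : ℕ, ⟪lam, S.coroot j⟫ = (n : ℝ)) ∧ (j ∈ I → ⟪lam, S.coroot j⟫ = 0)

/-- Membership in `Q_I^{++} = {Σ_{i ∈ Iᶜ} n_i ω_i : n_i ∈ ℤ>0}`. -/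
def MemQplusplus (S : SimpleSystem V r) (I : Finset (Fin r)) (lam : V) : Prop :=
  ∀ j, (j ∉ I → ∃ n : ℕ, 0 < n ∧ ⟪lam, S.coroot j⟫ = (n : ℝ)) ∧
    (j ∈ I → ⟪lam, S.coroot j⟫ = 0)

/-- `β` is a positive root: a root which is a nonnegative combination of the
simple roots. -/
def IsPositiveRoot (S : SimpleSystem V r) (β : V) : Prop :=
  β ∈ S.Φ ∧ ∃ c : Fin r → ℝ, (∀ i, 0 ≤ c i) ∧ β = ∑ i, c i • S.α i

end SimpleSystem

/-!
For dominant `ξ, η` and `w ∈ W` one has `⟪ξ, w η⟫ ≤ ⟪ξ, η⟫`: write `w = w' s_j`; if `w' α_j` is a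
positive root then `⟪ξ, w η⟫ = ⟪ξ, w' η⟫ - ⟪η, αᵛ_j⟫ ⟪ξ, w' α_j⟫ ≤ ⟪ξ, w' η⟫`, and otherwise the
exchange property gives a shorter word for `w`.

Let `ν₁ = w₁ μ₁`, `ν₂ = w₂ μ₂` be the dominant representatives and `λ₁ - ν₁ = Σ cᵢ αᵛᵢ`. Then
`⟪μ₁, μ₂⟫ ≤ ⟪ν₁, ν₂⟫ ≤ ⟪ν₁, λ₂⟫ = ⟪λ₁, λ₂⟫ - Σ cᵢ ⟪λ₂, αᵛᵢ⟫`, so equality forces `cᵢ = 0`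
whenever `⟪λ₂, αᵛᵢ⟫ > 0`, i.e. for `i ∉ I`. Then `‖λ₁ - ν₁‖² = -Σ_{i ∈ I} cᵢ ⟪ν₁, αᵛᵢ⟫ ≤ 0`, so
`μ₁ ∈ W λ₁`. Finally `s_i λ₁ = λ₁` for `i ∈ I`, so if `w λ₁ = μ₁` and `w α_i < 0` for some
`i ∈ I`, the exchange property turns `w s_i` into a shorter word with the same property.
-/

section Reflection

open Submodule

variable {V : Type*} [NormedAddCommGroup V] [InnerProductSpace ℝ V]

theorem Submodule.reflection_orthogonal_singleton_apply (v x : V) :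
    reflection (ℝ ∙ v)ᗮ x = x - (2 * ⟪x, v⟫ / ⟪v, v⟫) • v := by
  rw [reflection_orthogonal_apply, reflection_singleton_apply, real_inner_self_eq_norm_sq,
    real_inner_comm]
  simp only [RCLike.ofReal_real_eq_id, id_eq]
  module

theorem Submodule.reflection_orthogonal_singleton_smul {c : ℝ} (hc : c ≠ 0) (v : V) :
    reflection (ℝ ∙ c • v)ᗮ = reflection (ℝ ∙ v)ᗮ := by
  simp_rw [span_singleton_smul_eq hc.isUnit]

theorem LinearIsometryEquiv.apply_reflection_orthogonal_singleton (w : V ≃ₗᵢ[ℝ] V)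
    (v x : V) : w (reflection (ℝ ∙ v)ᗮ x) = reflection (ℝ ∙ w v)ᗮ (w x) := by
  simp only [reflection_orthogonal_singleton_apply, map_sub, map_smul,
    LinearIsometryEquiv.inner_map_map]

theorem eq_zero_of_eq_sum_smul_of_inner_nonpos {ι : Type*} [Fintype ι] {x : V}
    {c : ι → ℝ} {v : ι → V} (hc : ∀ i, 0 ≤ c i) (hx : x = ∑ i, c i • v i)
    (hinner : ∀ i, c i ≠ 0 → ⟪x, v i⟫ ≤ 0) : x = 0 := by
  have hle : ⟪x, x⟫ ≤ 0 := by
    rw [show ⟪x, x⟫ = ⟪x, ∑ i, c i • v i⟫ by rw [← hx], inner_sum]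
    refine Finset.sum_nonpos fun i _ => ?_
    rw [real_inner_smul_right]
    rcases (hc i).eq_or_lt with h | h
    · rw [← h, zero_mul]
    · exact mul_nonpos_of_nonneg_of_nonpos h.le (hinner i h.ne')
  exact real_inner_self_nonpos.1 hle

end Reflection

namespace SimpleSystem

variable {V : Type*} [NormedAddCommGroup V] [InnerProductSpace ℝ V] {r : ℕ}
  (S : SimpleSystem V r)

theorem inner_alpha_self_pos (i : Fin r) : 0 < ⟪S.α i, S.α i⟫ :=
  real_inner_self_pos.2 (S.ne_zero _ (S.α_mem i))

theorem inner_coroot (x : V) (i : Fin r) :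
    ⟪x, S.coroot i⟫ = 2 / ⟪S.α i, S.α i⟫ * ⟪x, S.α i⟫ :=
  real_inner_smul_right _ _ _

theorem simpleReflection_apply (i : Fin r) (x : V) :
    S.simpleReflection i x = x - ⟪x, S.coroot i⟫ • S.α i := by
  rw [simpleReflection, Submodule.reflection_orthogonal_singleton_apply, inner_coroot]
  ring_nf

theorem simpleReflection_mul_self (i : Fin r) :
    S.simpleReflection i * S.simpleReflection i = 1 :=
  Submodule.reflection_mul_reflection _

theorem simpleReflection_inv (i : Fin r) : (S.simpleReflection i)⁻¹ = S.simpleReflection i :=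
  inv_eq_of_mul_eq_one_right (S.simpleReflection_mul_self i)

theorem simpleReflection_mem {β : V} (i : Fin r) (hβ : β ∈ S.Φ) :
    S.simpleReflection i β ∈ S.Φ := by
  rw [simpleReflection, Submodule.reflection_orthogonal_singleton_apply]
  exact S.reflect_mem _ (S.α_mem i) β hβ

theorem simpleReflection_mem_weylGroup (i : Fin r) : S.simpleReflection i ∈ S.weylGroup :=
  Subgroup.subset_closure ⟨i, rfl⟩

theorem mul_simpleReflection_eq_of_apply_alpha_eq_smul {w : V ≃ₗᵢ[ℝ] V} {i j : Fin r}
    {c : ℝ} (hc : c ≠ 0) (h : w (S.α j) = c • S.α i) :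
    w * S.simpleReflection j = S.simpleReflection i * w := by
  ext x
  simp only [LinearIsometryEquiv.coe_mul, Function.comp_apply, simpleReflection,
    w.apply_reflection_orthogonal_singleton, h,
    Submodule.reflection_orthogonal_singleton_smul hc]

theorem isPositiveRoot_alpha (i : Fin r) : S.IsPositiveRoot (S.α i) := by
  classical
  refine ⟨S.α_mem i, Pi.single i 1, fun j => ?_, ?_⟩
  · rw [Pi.single_apply]; split_ifs <;> norm_num
  · simp

theorem neg_mem {β : V} (hβ : β ∈ S.Φ) : -β ∈ S.Φ := by
  have h := S.reflect_mem β hβ β hβ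
  rwa [← Submodule.reflection_orthogonal_singleton_apply,
    Submodule.reflection_orthogonalComplement_singleton_eq_neg] at h

theorem isPositiveRoot_or_isPositiveRoot_neg {β : V} (hβ : β ∈ S.Φ) :
    S.IsPositiveRoot β ∨ S.IsPositiveRoot (-β) := by
  rcases S.base β hβ with ⟨c, hc, hβc⟩ | ⟨c, hc, hβc⟩
  · exact .inl ⟨hβ, c, hc, hβc⟩
  · exact .inr ⟨S.neg_mem hβ, c, hc, by rw [hβc, neg_neg]⟩

theorem exists_pos_smul_alpha_of_not_isPositiveRoot_simpleReflection {β : V} {i : Fin r}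
    (hβ : S.IsPositiveRoot β) (hs : ¬ S.IsPositiveRoot (S.simpleReflection i β)) :
    ∃ c : ℝ, 0 < c ∧ β = c • S.α i := by
  classical
  obtain ⟨hβΦ, c, hc, hβc⟩ := hβ
  obtain ⟨-, d, hd, hsd⟩ :=
    (S.isPositiveRoot_or_isPositiveRoot_neg (S.simpleReflection_mem i hβΦ)).resolve_left hs
  have hcd : c + d = Pi.single i ⟪β, S.coroot i⟫ :=
    S.indep.fintypeLinearCombination_injective <| by
      rw [map_add, Fintype.linearCombination_apply_single, Fintype.linearCombination_apply,
        Fintype.linearCombination_apply, ← hβc, ← hsd, simpleReflection_apply]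
      abel
  have hcj : ∀ j ≠ i, c j = 0 := fun j hj => by
    have := congrFun hcd j
    rw [Pi.add_apply, Pi.single_eq_of_ne hj] at this
    linarith [hc j, hd j]
  have hβi : β = c i • S.α i := by
    rw [hβc, Finset.sum_eq_single i (fun j _ hj => by rw [hcj j hj, zero_smul]) (by simp)]
  refine ⟨c i, (hc i).lt_of_ne fun h => S.ne_zero β hβΦ ?_, hβi⟩
  rw [hβi, ← h, zero_smul]

noncomputable def word (l : List (Fin r)) : V ≃ₗᵢ[ℝ] V :=
  (l.map S.simpleReflection).prod

@[simp]
theorem word_nil : S.word [] = 1 := rfl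

theorem word_cons (i : Fin r) (l : List (Fin r)) :
    S.word (i :: l) = S.simpleReflection i * S.word l := by
  simp [word]

theorem word_append (l m : List (Fin r)) : S.word (l ++ m) = S.word l * S.word m := by
  simp [word]

theorem word_mem_weylGroup (l : List (Fin r)) : S.word l ∈ S.weylGroup := by
  induction l with
  | nil => exact one_mem _
  | cons i l ih => rw [word_cons]; exact mul_mem (S.simpleReflection_mem_weylGroup i) ih

theorem exists_word_of_mem_weylGroup {w : V ≃ₗᵢ[ℝ] V} (hw : w ∈ S.weylGroup) :
    ∃ l, S.word l = w := by
  induction hw using Subgroup.closure_induction_left with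
  | one => exact ⟨[], rfl⟩
  | mul_left _ hs _ _ ih =>
    obtain ⟨i, rfl⟩ := hs
    obtain ⟨l, rfl⟩ := ih
    exact ⟨i :: l, S.word_cons i l⟩
  | inv_mul_cancel _ hs _ _ ih =>
    obtain ⟨i, rfl⟩ := hs
    obtain ⟨l, rfl⟩ := ih
    exact ⟨i :: l, by rw [word_cons, simpleReflection_inv]⟩

theorem exists_shorter_word_of_not_isPositiveRoot {l : List (Fin r)} {j : Fin r}
    (h : ¬ S.IsPositiveRoot (S.word l (S.α j))) :
    ∃ m : List (Fin r), m.length < l.length ∧ S.word m = S.word l * S.simpleReflection j := by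
  induction l with
  | nil => exact absurd (S.isPositiveRoot_alpha j) h
  | cons i l ih =>
    rw [word_cons, LinearIsometryEquiv.coe_mul, Function.comp_apply] at h
    rw [word_cons]
    by_cases hl : S.IsPositiveRoot (S.word l (S.α j))
    · obtain ⟨c, hc, hlc⟩ := S.exists_pos_smul_alpha_of_not_isPositiveRoot_simpleReflection hl h
      refine ⟨l, by simp, ?_⟩
      rw [mul_assoc, S.mul_simpleReflection_eq_of_apply_alpha_eq_smul hc.ne' hlc, ← mul_assoc,
        simpleReflection_mul_self, one_mul]
    · obtain ⟨m, hm, hlm⟩ := ih hl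
      exact ⟨i :: m, by simpa using hm, by rw [word_cons, hlm, mul_assoc]⟩

theorem exists_word_apply_eq_and_isPositiveRoot {I : Finset (Fin r)} {x : V}
    (hx : ∀ i ∈ I, ⟪x, S.coroot i⟫ = 0) (l : List (Fin r)) :
    ∃ m, S.word m x = S.word l x ∧ ∀ i ∈ I, S.IsPositiveRoot (S.word m (S.α i)) := by
  by_cases h : ∀ i ∈ I, S.IsPositiveRoot (S.word l (S.α i))
  · exact ⟨l, rfl, h⟩
  push Not at h
  obtain ⟨i, hi, hneg⟩ := h
  obtain ⟨m, hlen, hm⟩ := S.exists_shorter_word_of_not_isPositiveRoot hneg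
  obtain ⟨m', hm'x, hpos⟩ := exists_word_apply_eq_and_isPositiveRoot hx m
  refine ⟨m', ?_, hpos⟩
  rw [hm'x, hm, LinearIsometryEquiv.coe_mul, Function.comp_apply, simpleReflection_apply,
    hx i hi, zero_smul, sub_zero]
termination_by l.length

section Dominance

variable {S}

theorem IsDominant.inner_alpha_nonneg {ξ : V} (hξ : S.IsDominant ξ) (i : Fin r) :
    0 ≤ ⟪ξ, S.α i⟫ := by
  have h := hξ i
  rw [inner_coroot] at h
  exact nonneg_of_mul_nonneg_right h (div_pos two_pos (S.inner_alpha_self_pos i))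

theorem IsDominant.inner_sum_smul_coroot_nonneg {ξ : V} (hξ : S.IsDominant ξ)
    {c : Fin r → ℝ} (hc : ∀ i, 0 ≤ c i) : 0 ≤ ⟪ξ, ∑ i, c i • S.coroot i⟫ := by
  rw [inner_sum]
  exact Finset.sum_nonneg fun i _ => by
    rw [real_inner_smul_right]; exact mul_nonneg (hc i) (hξ i)

theorem IsDominant.inner_nonneg_of_isPositiveRoot {ξ β : V} (hξ : S.IsDominant ξ)
    (hβ : S.IsPositiveRoot β) : 0 ≤ ⟪ξ, β⟫ := by
  obtain ⟨-, c, hc, rfl⟩ := hβ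
  rw [inner_sum]
  exact Finset.sum_nonneg fun i _ => by
    rw [real_inner_smul_right]; exact mul_nonneg (hc i) (hξ.inner_alpha_nonneg i)

theorem MemQplusplus.isDominant {I : Finset (Fin r)} {lam : V} (h : S.MemQplusplus I lam) :
    S.IsDominant lam := fun i => by
  by_cases hi : i ∈ I
  · exact ((h i).2 hi).ge
  · obtain ⟨n, -, hn⟩ := (h i).1 hi
    exact hn ▸ n.cast_nonneg

theorem MemQplusplus.eq_zero_of_sum_mul_inner_coroot_nonpos {I : Finset (Fin r)} {lam : V}
    (h : S.MemQplusplus I lam) {c : Fin r → ℝ} (hc : ∀ i, 0 ≤ c i)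
    (hsum : ∑ i, c i * ⟪lam, S.coroot i⟫ ≤ 0) {i : Fin r} (hi : i ∉ I) : c i = 0 := by
  have hterm : ∀ j ∈ Finset.univ, 0 ≤ c j * ⟪lam, S.coroot j⟫ := fun j _ =>
    mul_nonneg (hc j) (h.isDominant j)
  have hzero := (Finset.sum_eq_zero_iff_of_nonneg hterm).1
    (hsum.antisymm (Finset.sum_nonneg hterm)) i (Finset.mem_univ i)
  obtain ⟨n, hn, hlam⟩ := (h i).1 hi
  rw [hlam] at hzero
  exact (mul_eq_zero.1 hzero).resolve_right (by exact_mod_cast hn.ne')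

end Dominance

theorem inner_word_apply_le {ξ η : V} (hξ : S.IsDominant ξ) (hη : S.IsDominant η)
    (l : List (Fin r)) : ⟪ξ, S.word l η⟫ ≤ ⟪ξ, η⟫ := by
  obtain rfl | ⟨m, j, rfl⟩ := l.eq_nil_or_concat'
  · simp
  by_cases hm : S.IsPositiveRoot (S.word m (S.α j))
  · calc ⟪ξ, S.word (m ++ [j]) η⟫
        = ⟪ξ, S.word m η⟫ - ⟪η, S.coroot j⟫ * ⟪ξ, S.word m (S.α j)⟫ := by
          simp [word_append, word_cons, simpleReflection_apply, inner_sub_right,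
            real_inner_smul_right]
      _ ≤ ⟪ξ, S.word m η⟫ :=
          sub_le_self _ (mul_nonneg (hη j) (hξ.inner_nonneg_of_isPositiveRoot hm))
      _ ≤ ⟪ξ, η⟫ := inner_word_apply_le hξ hη m
  · obtain ⟨m', hlen, hm'⟩ := S.exists_shorter_word_of_not_isPositiveRoot hm
    rw [word_append, word_cons, word_nil, mul_one, ← hm']
    exact inner_word_apply_le hξ hη m'
termination_by l.length
decreasing_by all_goals simp_all <;> omega

theorem inner_apply_le_of_isDominant {w : V ≃ₗᵢ[ℝ] V} (hw : w ∈ S.weylGroup) {ξ η : V}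
    (hξ : S.IsDominant ξ) (hη : S.IsDominant η) : ⟪ξ, w η⟫ ≤ ⟪ξ, η⟫ := by
  obtain ⟨l, rfl⟩ := S.exists_word_of_mem_weylGroup hw
  exact S.inner_word_apply_le hξ hη l

variable {S} in
theorem inner_le_of_isSubdominant {w : V ≃ₗᵢ[ℝ] V} (hw : w ∈ S.weylGroup) {ν lam μ : V}
    (hν : S.IsDominant ν) (hμ : S.IsSubdominant lam μ) : ⟪w ν, μ⟫ ≤ ⟪ν, lam⟫ := by
  obtain ⟨u, hu, hdom, d, hd, hsub⟩ := hμ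
  calc ⟪w ν, μ⟫ = ⟪u μ, (u * w) ν⟫ := by
        rw [LinearIsometryEquiv.coe_mul, Function.comp_apply, u.inner_map_map, real_inner_comm]
    _ ≤ ⟪u μ, ν⟫ := S.inner_apply_le_of_isDominant (mul_mem hu hw) hdom hν
    _ = ⟪ν, lam⟫ - ⟪ν, lam - u μ⟫ := by rw [inner_sub_right, real_inner_comm]; ring
    _ ≤ ⟪ν, lam⟫ := sub_le_self _ (hsub ▸ hν.inner_sum_smul_coroot_nonneg hd)

theorem exists_eq_apply_of_inner_eq {I : Finset (Fin r)} {lam1 lam2 mu1 mu2 : V}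
    (h1 : S.MemQplus I lam1) (h2 : S.MemQplusplus I lam2)
    (hm1 : S.IsSubdominant lam1 mu1) (hm2 : S.IsSubdominant lam2 mu2)
    (heq : ⟪mu1, mu2⟫ = ⟪lam1, lam2⟫) : ∃ w ∈ S.weylGroup, mu1 = w lam1 := by
  obtain ⟨w, hw, hν, c, hc, hsub⟩ := hm1
  have hmu1 : mu1 = w⁻¹ (w mu1) := (w.symm_apply_apply mu1).symm
  have hsum : ∑ i, c i * ⟪lam2, S.coroot i⟫ ≤ 0 := by
    have hle := inner_le_of_isSubdominant (inv_mem hw) hν hm2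
    have hsplit : ⟪lam1 - w mu1, lam2⟫ = ∑ i, c i * ⟪lam2, S.coroot i⟫ := by
      rw [hsub, sum_inner]
      exact Finset.sum_congr rfl fun i _ => by rw [real_inner_smul_left, real_inner_comm]
    rw [← hmu1, heq] at hle
    rw [inner_sub_left] at hsplit
    linarith
  have hlam1 : lam1 - w mu1 = 0 := by
    refine eq_zero_of_eq_sum_smul_of_inner_nonpos hc hsub fun i hci => ?_
    have hi : i ∈ I := by_contra fun hi =>
      hci (h2.eq_zero_of_sum_mul_inner_coroot_nonpos hc hsum hi)
    rw [inner_sub_left, (h1 i).2 hi, zero_sub, neg_nonpos]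
    exact hν i
  exact ⟨w⁻¹, inv_mem hw, by rw [sub_eq_zero.1 hlam1, ← hmu1]⟩

end SimpleSystem

theorem exists_minimal_rep_of_inner_eq_general {V : Type*} [NormedAddCommGroup V]
    [InnerProductSpace ℝ V] {r : ℕ}
    (S : SimpleSystem V r) (I : Finset (Fin r)) {lam1 lam2 mu1 mu2 : V}
    (h1 : S.MemQplus I lam1) (h2 : S.MemQplusplus I lam2)
    (hm1 : S.IsSubdominant lam1 mu1) (hm2 : S.IsSubdominant lam2 mu2)
    (heq : ⟪mu1, mu2⟫ = ⟪lam1, lam2⟫) :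
    ∃ w ∈ S.weylGroup, mu1 = w lam1 ∧ ∀ i ∈ I, S.IsPositiveRoot (w (S.α i)) := by
  obtain ⟨w, hw, rfl⟩ := S.exists_eq_apply_of_inner_eq h1 h2 hm1 hm2 heq
  obtain ⟨l, rfl⟩ := S.exists_word_of_mem_weylGroup hw
  obtain ⟨m, hm, hpos⟩ :=
    S.exists_word_apply_eq_and_isPositiveRoot (fun i hi => (h1 i).2 hi) l
  exact ⟨S.word m, S.word_mem_weylGroup m, hm.symm, hpos⟩

/-- Lemma 1, first equality case: if `λ1 ∈ Q_I^+`, `λ2 ∈ Q_I^{++}`, `μ1, μ2` are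
subdominant to `λ1, λ2` respectively and `⟪μ1, μ2⟫ = ⟪λ1, λ2⟫`, then `μ1 = w λ1`
for some `w` in the Weyl group sending `α i` to a positive root for every `i ∈ I`
(i.e. `w ∈ W^I`, a minimal length coset representative of `W/W_I`). -/
theorem exists_minimal_rep_of_inner_eq {V : Type*} [NormedAddCommGroup V]
    [InnerProductSpace ℝ V] [FiniteDimensional ℝ V] {r : ℕ}
    (S : SimpleSystem V r) (I : Finset (Fin r)) {lam1 lam2 mu1 mu2 : V}
    (h1 : S.MemQplus I lam1) (h2 : S.MemQplusplus I lam2)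
    (hm1 : S.IsSubdominant lam1 mu1) (hm2 : S.IsSubdominant lam2 mu2)
    (heq : ⟪mu1, mu2⟫ = ⟪lam1, lam2⟫) :
    ∃ w ∈ S.weylGroup, mu1 = w lam1 ∧ ∀ i ∈ I, S.IsPositiveRoot (w (S.α i)) :=
  exists_minimal_rep_of_inner_eq_general S I h1 h2 hm1 hm2 heq
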